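/- Theorem 2 (feasible points of the convex relaxation map to zero-forcing beamformers without losing weighted sum rate): Let H = [h_1, …, h_K] ∈ ℂ^{M×K} have rank K (so K ≤ M), and for each k let U_k ∈ ℂ^{M×(M−K+1)} have orthonormal columns spanning the orthogonal complement of span{ h_j : j ≠ k }. Let Φ_1, …, Φ_L ∈ ℂ^{M×M} be Hermitian positive semidefinite with Φ_1 = I (sum-power constraint), let γ_ℓ > 0, and let W_1, …, W_K ≥ 0. Suppose Ã_1, …, Ã_K ∈ ℂ^{(M−K+1)×(M−K+1)} are Hermitian positive semidefinite and satisfy Σ_{k=1}^K tr( Ã_k U_k^H Φ_ℓ U_k ) ≤ γ_ℓ for every ℓ. Then there exist vectors t̃_1, …, t̃_K ∈ ℂ^M with: (i) h_j^H t̃_k = 0 for all j ≠ k; (ii) Σ_{k=1}^K t̃_k^H Φ_ℓ t̃_k ≤ γ_ℓ for every ℓ; and (iii) Σ_{k=1}^K W_k log(1 + |h_k^H t̃_k|²) ≥ Σ_{k=1}^K W_k log(1 + h_k^H U_k Ã_k U_k^H h_k). In other words, any feasible (not necessarily rank-one) point of the convex relaxation of the zero-forcing weighted sum rate maximization problem can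 be mapped to a set of feasible zero-forcing steering vectors without decreasing the weighted sum rate objective. -/

import Mathlib

/-!
Put `Q_k = U_k Ã_k U_kᴴ` and `t_k = Q_k h_k / √(h_kᴴ Q_k h_k)`. Since `Q_k` factors through
`U_k`, the vector `t_k` lies in the span of the columns of `U_k`, so it is zero-forcing, and
`h_kᴴ t_k = √(h_kᴴ Q_k h_k)`, so every rate term is unchanged. The power constraints follow from
`(Q h)ᴴ Φ (Q h) ≤ (hᴴ Q h) tr (Q Φ)` for positive semidefinite `Q`, `Φ`, and cyclicity of the
trace. Writing `Q = Sᴴ S`, that inequality is `vᴴ P v ≤ tr P ‖v‖²` for `v = S h` and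
`P = S Φ Sᴴ`, i.e. the Frobenius norm of a square root of `P` bounds its operator norm.
-/

open Matrix BigOperators Finset
open scoped ComplexOrder

namespace Matrix

variable {𝕜 m n : Type*} [RCLike 𝕜] [Fintype m] [Fintype n]

open WithLp (toLp)

theorem re_star_dotProduct_self (v : n → 𝕜) :
    RCLike.re (star v ⬝ᵥ v) = ‖toLp 2 v‖ ^ 2 := by
  rw [← inner_self_eq_norm_sq (𝕜 := 𝕜), EuclideanSpace.inner_toLp_toLp, dotProduct_comm]

section Frobenius

attribute [local instance] frobeniusNormedAddCommGroup

theorem re_trace_conjTranspose_mul_self_eq_frobenius_norm_sq (T : Matrix m n 𝕜) :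
    RCLike.re (Tᴴ * T).trace = ‖T‖ ^ 2 := by
  rw [frobenius_norm_def, ← Real.sqrt_eq_rpow, Real.sq_sqrt (by positivity), Finset.sum_comm]
  simp only [trace, diag, mul_apply, conjTranspose_apply, RCLike.star_def, RCLike.conj_mul,
    map_sum]
  norm_cast

theorem frobenius_norm_mulVec_le (T : Matrix m n 𝕜) (v : n → 𝕜) :
    ‖toLp 2 (T *ᵥ v)‖ ≤ ‖T‖ * ‖toLp 2 v‖ := by
  simpa only [← frobenius_norm_replicateCol (ι := Unit), replicateCol_mulVec] using
    frobenius_norm_mul T (replicateCol Unit v)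

theorem re_dotProduct_conjTranspose_mul_self_mulVec_le (T : Matrix m n 𝕜) (v : n → 𝕜) :
    RCLike.re (star v ⬝ᵥ (Tᴴ * T) *ᵥ v) ≤
      RCLike.re (Tᴴ * T).trace * RCLike.re (star v ⬝ᵥ v) := by
  rw [← mulVec_mulVec, dotProduct_mulVec, vecMul_conjTranspose, star_star,
    re_star_dotProduct_self, re_star_dotProduct_self,
    re_trace_conjTranspose_mul_self_eq_frobenius_norm_sq, ← mul_pow]
  exact pow_le_pow_left₀ (norm_nonneg _) (frobenius_norm_mulVec_le T v) 2

end Frobenius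

section MatrixOrder

open scoped MatrixOrder

theorem PosSemidef.re_dotProduct_mulVec_le_re_trace_mul {P : Matrix n n 𝕜} (hP : P.PosSemidef)
    (v : n → 𝕜) :
    RCLike.re (star v ⬝ᵥ P *ᵥ v) ≤ RCLike.re P.trace * RCLike.re (star v ⬝ᵥ v) := by
  classical
  obtain ⟨T, rfl⟩ := CStarAlgebra.nonneg_iff_eq_star_mul_self.mp hP.nonneg
  exact re_dotProduct_conjTranspose_mul_self_mulVec_le T v

theorem PosSemidef.re_dotProduct_mulVec_mulVec_le_mul_re_trace {Q Φ : Matrix n n 𝕜}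
    (hQ : Q.PosSemidef) (hΦ : Φ.PosSemidef) (h : n → 𝕜) :
    RCLike.re (star (Q *ᵥ h) ⬝ᵥ Φ *ᵥ (Q *ᵥ h)) ≤
      RCLike.re (star h ⬝ᵥ Q *ᵥ h) * RCLike.re (Q * Φ).trace := by
  classical
  obtain ⟨S, rfl⟩ := CStarAlgebra.nonneg_iff_eq_star_mul_self.mp hQ.nonneg
  rw [star_eq_conjTranspose]
  have hquad : star h ⬝ᵥ (Sᴴ * S) *ᵥ h = star (S *ᵥ h) ⬝ᵥ S *ᵥ h := by
    rw [← mulVec_mulVec, dotProduct_mulVec, vecMul_conjTranspose, star_star]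
  have hform : star ((Sᴴ * S) *ᵥ h) ⬝ᵥ Φ *ᵥ ((Sᴴ * S) *ᵥ h) =
      star (S *ᵥ h) ⬝ᵥ (S * Φ * Sᴴ) *ᵥ (S *ᵥ h) := by
    simp only [← mulVec_mulVec, star_mulVec, dotProduct_mulVec, vecMul_vecMul,
      conjTranspose_conjTranspose]
  have htrace : (Sᴴ * S * Φ).trace = (S * Φ * Sᴴ).trace := by
    rw [Matrix.mul_assoc, trace_mul_comm, Matrix.mul_assoc]
  rw [hform, hquad, htrace, mul_comm]
  exact (hΦ.mul_mul_conjTranspose_same S).re_dotProduct_mulVec_le_re_trace_mul _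

theorem PosSemidef.trace_mul_nonneg {A B : Matrix n n 𝕜} (hA : A.PosSemidef)
    (hB : B.PosSemidef) : 0 ≤ (A * B).trace := by
  classical
  obtain ⟨S, rfl⟩ := CStarAlgebra.nonneg_iff_eq_star_mul_self.mp hA.nonneg
  rw [Matrix.mul_assoc, trace_mul_comm, Matrix.mul_assoc, star_eq_conjTranspose,
    ← Matrix.mul_assoc]
  exact (hB.mul_mul_conjTranspose_same S).trace_nonneg

end MatrixOrder

/-- `Q h / √(hᴴ Q h)`; since `(√0)⁻¹ = 0`, it is `0` when `hᴴ Q h = 0`. -/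
noncomputable def covarianceBeamformer (Q : Matrix n n 𝕜) (h : n → 𝕜) : n → 𝕜 :=
  ((√(RCLike.re (star h ⬝ᵥ Q *ᵥ h)) : 𝕜))⁻¹ • (Q *ᵥ h)

theorem PosSemidef.star_dotProduct_mulVec_eq_re {Q : Matrix n n 𝕜} (hQ : Q.PosSemidef)
    (h : n → 𝕜) : star h ⬝ᵥ Q *ᵥ h = (RCLike.re (star h ⬝ᵥ Q *ᵥ h) : 𝕜) :=
  RCLike.ext (by simp) (by simp [(RCLike.nonneg_iff.mp (hQ.dotProduct_mulVec_nonneg h)).2])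

theorem star_dotProduct_covarianceBeamformer {Q : Matrix n n 𝕜} (hQ : Q.PosSemidef)
    (h : n → 𝕜) :
    star h ⬝ᵥ covarianceBeamformer Q h = (√(RCLike.re (star h ⬝ᵥ Q *ᵥ h)) : 𝕜) := by
  rw [covarianceBeamformer, dotProduct_smul, smul_eq_mul]
  set c := RCLike.re (star h ⬝ᵥ Q *ᵥ h)
  rw [hQ.star_dotProduct_mulVec_eq_re, ← RCLike.ofReal_inv, ← RCLike.ofReal_mul, inv_mul_eq_div,
    Real.div_sqrt]

theorem norm_star_dotProduct_covarianceBeamformer_sq {Q : Matrix n n 𝕜} (hQ : Q.PosSemidef)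
    (h : n → 𝕜) :
    ‖star h ⬝ᵥ covarianceBeamformer Q h‖ ^ 2 = RCLike.re (star h ⬝ᵥ Q *ᵥ h) := by
  rw [star_dotProduct_covarianceBeamformer hQ, RCLike.norm_ofReal, sq_abs,
    Real.sq_sqrt (RCLike.nonneg_iff.mp (hQ.dotProduct_mulVec_nonneg h)).1]

theorem re_star_covarianceBeamformer_dotProduct_mulVec_le {Q Φ : Matrix n n 𝕜}
    (hQ : Q.PosSemidef) (hΦ : Φ.PosSemidef) (h : n → 𝕜) :
    RCLike.re (star (covarianceBeamformer Q h) ⬝ᵥ Φ *ᵥ covarianceBeamformer Q h) ≤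
      RCLike.re (Q * Φ).trace := by
  set c := RCLike.re (star h ⬝ᵥ Q *ᵥ h)
  have hc : 0 ≤ c := (RCLike.nonneg_iff.mp (hQ.dotProduct_mulVec_nonneg h)).1
  have hscale : star (covarianceBeamformer Q h) ⬝ᵥ Φ *ᵥ covarianceBeamformer Q h =
      ((c⁻¹ : ℝ) : 𝕜) * (star (Q *ᵥ h) ⬝ᵥ Φ *ᵥ (Q *ᵥ h)) := by
    rw [covarianceBeamformer, star_smul, mulVec_smul, smul_dotProduct, dotProduct_smul,
      smul_smul, smul_eq_mul, ← RCLike.ofReal_inv, RCLike.star_def, RCLike.conj_ofReal,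
      ← RCLike.ofReal_mul, ← mul_inv, Real.mul_self_sqrt hc]
  have htrace : 0 ≤ RCLike.re (Q * Φ).trace := (RCLike.nonneg_iff.mp (hQ.trace_mul_nonneg hΦ)).1
  rw [hscale, RCLike.re_ofReal_mul]
  calc c⁻¹ * RCLike.re (star (Q *ᵥ h) ⬝ᵥ Φ *ᵥ (Q *ᵥ h))
      ≤ c⁻¹ * (c * RCLike.re (Q * Φ).trace) :=
        mul_le_mul_of_nonneg_left (hQ.re_dotProduct_mulVec_mulVec_le_mul_re_trace hΦ h)
          (inv_nonneg.mpr hc)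
    _ = (c⁻¹ * c) * RCLike.re (Q * Φ).trace := (mul_assoc _ _ _).symm
    _ ≤ RCLike.re (Q * Φ).trace := mul_le_of_le_one_left htrace inv_mul_le_one

theorem covarianceBeamformer_mul_mem_span_col {p : Type*} [Fintype p] (U : Matrix n p 𝕜)
    (B : Matrix p n 𝕜) (h : n → 𝕜) :
    covarianceBeamformer (U * B) h ∈ Submodule.span 𝕜 (Set.range U.col) := by
  rw [← range_mulVecLin, covarianceBeamformer, ← mulVec_mulVec, ← mulVec_smul]
  exact LinearMap.mem_range_self _ _

end Matrix

theorem convex_relaxation_to_zero_forcing_beamformers_general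
    (M K L : ℕ)
    (h : Fin K → (Fin M → ℂ))
    (U : Fin K → Matrix (Fin M) (Fin (M - K + 1)) ℂ)
    (hUspan : ∀ k, (↑(Submodule.span ℂ
        (Set.range (fun j : Fin (M - K + 1) => fun i => U k i j))) : Set (Fin M → ℂ)) =
      {v | ∀ j : Fin K, j ≠ k → star (h j) ⬝ᵥ v = 0})
    (Φ : Fin L → Matrix (Fin M) (Fin M) ℂ) (hΦ : ∀ ℓ, (Φ ℓ).PosSemidef)
    (γ : Fin L → ℝ)
    (W : Fin K → ℝ)
    (Atil : Fin K → Matrix (Fin (M - K + 1)) (Fin (M - K + 1)) ℂ)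
    (hAtil : ∀ k, (Atil k).PosSemidef)
    (hAfeas : ∀ ℓ, ∑ k, ((Atil k) * ((U k)ᴴ * Φ ℓ * U k)).trace.re ≤ γ ℓ) :
    ∃ t : Fin K → (Fin M → ℂ),
      (∀ j k : Fin K, j ≠ k → star (h j) ⬝ᵥ t k = 0) ∧
      (∀ ℓ, ∑ k, (star (t k) ⬝ᵥ ((Φ ℓ) *ᵥ t k)).re ≤ γ ℓ) ∧
      (∑ k, W k * Real.log (1 + Complex.normSq (star (h k) ⬝ᵥ t k)) ≥
        ∑ k, W k * Real.log
          (1 + (star (h k) ⬝ᵥ ((U k * Atil k * (U k)ᴴ) *ᵥ h k)).re)) := by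
  have hQ k : (U k * Atil k * (U k)ᴴ).PosSemidef := (hAtil k).mul_mul_conjTranspose_same (U k)
  refine ⟨fun k => covarianceBeamformer (U k * Atil k * (U k)ᴴ) (h k), ?_, ?_, ?_⟩
  · intro j k hjk
    have hmem := covarianceBeamformer_mul_mem_span_col (U k) (Atil k * (U k)ᴴ) (h k)
    rw [← Matrix.mul_assoc, ← SetLike.mem_coe] at hmem
    exact (hUspan k ▸ hmem) j hjk
  · intro ℓ
    refine le_trans (sum_le_sum fun k _ => ?_) (hAfeas ℓ)
    calc _ ≤ RCLike.re (U k * Atil k * (U k)ᴴ * Φ ℓ).trace :=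
          re_star_covarianceBeamformer_dotProduct_mulVec_le (hQ k) (hΦ ℓ) (h k)
      _ = _ := by
          simp only [Matrix.mul_assoc]
          rw [trace_mul_comm (U k)]
          simp only [Matrix.mul_assoc]
          rfl
  · refine ge_of_eq (sum_congr rfl fun k _ => ?_)
    rw [Complex.normSq_eq_norm_sq, norm_star_dotProduct_covarianceBeamformer_sq (hQ k)]
    rfl

/-- **Theorem 2: feasible points of the convex relaxation map to zero-forcing
beamformers without losing weighted sum rate.** Given matrices `U_k` with
orthonormal columns spanning the orthogonal complement of `span{h_j : j ≠ k}`,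
any Hermitian PSD matrices `Ã_k` satisfying the linear constraints
`∑ k, tr(Ã_k U_kᴴ Φ_ℓ U_k) ≤ γ_ℓ` can be mapped to zero-forcing steering
vectors `t̃_k` that satisfy the same linear constraints and do not decrease
the weighted sum rate objective. -/
theorem convex_relaxation_to_zero_forcing_beamformers
    (M K L : ℕ) (hKM : K ≤ M) (hL : 0 < L)
    (h : Fin K → (Fin M → ℂ))
    (hrank : (Matrix.of fun i (j : Fin K) => h j i : Matrix (Fin M) (Fin K) ℂ).rank = K)
    (U : Fin K → Matrix (Fin M) (Fin (M - K + 1)) ℂ)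
    (hUorth : ∀ k, (U k)ᴴ * U k = 1)
    (hUspan : ∀ k, (↑(Submodule.span ℂ
        (Set.range (fun j : Fin (M - K + 1) => fun i => U k i j))) : Set (Fin M → ℂ)) =
      {v | ∀ j : Fin K, j ≠ k → star (h j) ⬝ᵥ v = 0})
    (Φ : Fin L → Matrix (Fin M) (Fin M) ℂ) (hΦ : ∀ ℓ, (Φ ℓ).PosSemidef)
    (hΦ1 : Φ ⟨0, hL⟩ = 1)
    (γ : Fin L → ℝ) (hγ : ∀ ℓ, 0 < γ ℓ)
    (W : Fin K → ℝ) (hW : ∀ k, 0 ≤ W k)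
    (Atil : Fin K → Matrix (Fin (M - K + 1)) (Fin (M - K + 1)) ℂ)
    (hAtil : ∀ k, (Atil k).PosSemidef)
    (hAfeas : ∀ ℓ, ∑ k, ((Atil k) * ((U k)ᴴ * Φ ℓ * U k)).trace.re ≤ γ ℓ) :
    ∃ t : Fin K → (Fin M → ℂ),
      (∀ j k : Fin K, j ≠ k → star (h j) ⬝ᵥ t k = 0) ∧
      (∀ ℓ, ∑ k, (star (t k) ⬝ᵥ ((Φ ℓ) *ᵥ t k)).re ≤ γ ℓ) ∧
      (∑ k, W k * Real.log (1 + Complex.normSq (star (h k) ⬝ᵥ t k)) ≥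
        ∑ k, W k * Real.log
          (1 + (star (h k) ⬝ᵥ ((U k * Atil k * (U k)ᴴ) *ᵥ h k)).re)) :=
  convex_relaxation_to_zero_forcing_beamformers_general M K L h U hUspan Φ hΦ γ W Atil hAtil hAfeas
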